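/- arXiv:1605.04617 — 5 statements merged into one kernel-verified Lean document; each statement's English description precedes it below -/
import Mathlib

section
/- Let J be the \kappa-by-\kappa upper-triangular Jordan block with eigenvalue x_a, let r_0, ..., r_{\kappa-1} be vectors in ℂ^p, set r(x) = \sum_{j=0}^{\kappa-1} r_j (x - x_a)^j, and let R = [r_0, ..., r_{\kappa-1}] be the p-by-\kappa matrix with these columns. Then for every natural number n, the p-by-\kappa matrix whose m-th column (0 \le m \le \kappa-1) is (1/m!) times the m-th derivative of x^n * r(x) evaluated at x = x_a equals R * J^n. -/
/-!
Both sides are Taylor coefficients at `x_a`. Writing `q = ∑ r_j X^j`, so that `r = q(X - x_a)`,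
the left side is the `m`-th coefficient of `taylor x_a (X^n r) = (X + x_a)^n q`. On the right,
multiplying the coefficient row of a polynomial by `J = x_a I + S` gives the coefficient row of
`(X + x_a)` times it, because `S` shifts coefficients up by one; the truncation to the first `κ`
coefficients is harmless since the `m`-th coefficient of a product only sees coefficients `≤ m`.
Iterating, `R * J^n` has the rows of `(X + x_a)^n q`.
-/

open Polynomial Matrix

section JordanBlock

variable {R : Type*} [CommSemiring R]

def jordanBlock (κ : ℕ) (a : R) : Matrix (Fin κ) (Fin κ) R :=
  Matrix.of fun i j => if j = i then a else if (j : ℕ) = (i : ℕ) + 1 then 1 else 0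

theorem jordanBlock_apply_eq_add {κ : ℕ} (a : R) (i j : Fin κ) :
    jordanBlock κ a i j = (if i = j then a else 0) + if (i : ℕ) + 1 = j then 1 else 0 := by
  by_cases h : i = j
  · subst h; simp [jordanBlock]
  · simp [jordanBlock, h, eq_comm]

theorem Fin.sum_ite_val_add_one_eq {M : Type*} [AddCommMonoid M] {κ : ℕ} (f : Fin κ → M)
    (m : Fin κ) :
    ∑ i : Fin κ, (if (i : ℕ) + 1 = m then f i else 0) =
      if h : (m : ℕ) = 0 then 0 else f ⟨m - 1, by omega⟩ := by
  split_ifs with h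
  · exact Finset.sum_eq_zero fun i _ => if_neg (by omega)
  · rw [Finset.sum_eq_single_of_mem (⟨m - 1, by omega⟩ : Fin κ) (Finset.mem_univ _)]
    · simp only [if_pos (show m - 1 + 1 = (m : ℕ) by omega)]
    · intro i _ hi
      exact if_neg fun e => hi (Fin.ext (by simp; omega))

theorem coeff_X_add_C_mul (a : R) (q : R[X]) (m : ℕ) :
    ((X + C a) * q).coeff m = (if m = 0 then 0 else q.coeff (m - 1)) + a * q.coeff m := by
  rcases m with _ | m <;> simp [add_mul, coeff_C_mul, coeff_X_mul]

theorem vecMul_jordanBlock_coeff {κ : ℕ} (a : R) (q : R[X]) :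
    (fun j : Fin κ => q.coeff j) ᵥ* jordanBlock κ a = fun m => ((X + C a) * q).coeff m := by
  ext m
  simp only [vecMul, dotProduct, jordanBlock_apply_eq_add, mul_add, mul_ite, mul_one, mul_zero,
    Finset.sum_add_distrib, Finset.sum_ite_eq', Finset.mem_univ, if_true,
    Fin.sum_ite_val_add_one_eq, coeff_X_add_C_mul]
  split_ifs <;> simp [mul_comm, add_comm]

theorem vecMul_jordanBlock_pow_coeff {κ : ℕ} (a : R) (q : R[X]) (n : ℕ) :
    (fun j : Fin κ => q.coeff j) ᵥ* jordanBlock κ a ^ n =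
      fun m => ((X + C a) ^ n * q).coeff m := by
  induction n with
  | zero => simp
  | succ n ih =>
    rw [pow_succ, ← vecMul_vecMul, ih, vecMul_jordanBlock_coeff, pow_succ', mul_assoc]

end JordanBlock

theorem taylor_sum_C_mul_X_sub_C_pow {R : Type*} [CommRing R] {ι : Type*} (s : Finset ι)
    (a : R) (c : ι → R) (d : ι → ℕ) :
    taylor a (∑ j ∈ s, C (c j) * (X - C a) ^ d j) = ∑ j ∈ s, C (c j) * X ^ d j := by
  simp [taylor_mul, taylor_pow]

theorem iterate_derivative_eval_div_factorial {K : Type*} [Field K] [CharZero K]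
    (a : K) (p : K[X]) (m : ℕ) :
    (derivative^[m] p).eval a / m.factorial = (taylor a p).coeff m := by
  rw [taylor_coeff, ← factorial_smul_hasseDeriv]
  simp [nsmul_eq_mul, Nat.factorial_ne_zero]

/-- Root spectral jets and Jordan blocks: with `J` the `κ×κ` Jordan block at `x_a`,
`r(x) = ∑_{j<κ} r_j (x-x_a)^j` and `R = [r_0,…,r_{κ-1}]`, the `m`-th column of the matrix
of normalized derivatives of `x^n r(x)` at `x_a` equals the `m`-th column of `R * J^n`. -/
theorem stmt_4 (p κ : ℕ) (xa : ℂ) (r : ℕ → Fin p → ℂ)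
    (J : Matrix (Fin κ) (Fin κ) ℂ)
    (hJ : ∀ i j : Fin κ,
      J i j = if j = i then xa else if (j : ℕ) = (i : ℕ) + 1 then 1 else 0)
    (R : Matrix (Fin p) (Fin κ) ℂ) (hR : ∀ (i : Fin p) (m : Fin κ), R i m = r (m : ℕ) i)
    (n : ℕ) (i : Fin p) (m : Fin κ) :
    (Polynomial.derivative^[(m : ℕ)]
          (Polynomial.X ^ n *
            ∑ j ∈ Finset.range κ,
              Polynomial.C (r j i) * (Polynomial.X - Polynomial.C xa) ^ j)).eval xa /
        ((m : ℕ).factorial : ℂ) =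
      (R * J ^ n) i m := by
  set q : ℂ[X] := ∑ j ∈ Finset.range κ, C (r j i) * X ^ j
  have hJ_eq : J = jordanBlock κ xa := Matrix.ext fun i j => hJ i j
  have hR_row : (fun j : Fin κ => q.coeff j) = R i := by
    ext j
    simp [q, hR, finsetSum_coeff]
  rw [iterate_derivative_eval_div_factorial, taylor_mul, taylor_sum_C_mul_X_sub_C_pow]
  calc ((taylor xa) (X ^ n) * q).coeff m = ((X + C xa) ^ n * q).coeff m := by
        rw [taylor_pow, taylor_X]
    _ = (R i ᵥ* J ^ n) m := by rw [hJ_eq, ← hR_row, vecMul_jordanBlock_pow_coeff]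
    _ = (R * J ^ n) i m := rfl
end

section
/- Let W(x) be a matrix polynomial of degree N with p-by-p complex coefficients, x_a \in ℂ, let l(x) be a covector polynomial (row vector valued) of degree at most \kappa_i - 1 such that (x - x_a)^{\kappa_i} divides l(x)*W(x), and let r(x) be a vector polynomial of degree at most \kappa_j - 1 such that (x - x_a)^{\kappa_j} divides W(x)*r(x). Then there exists a scalar polynomial w(x) \in ℂ[x] of degree at most min(\kappa_i, \kappa_j) + N - 2 such that l(x) * W(x) * r(x) = (x - x_a)^{max(\kappa_i, \kappa_j)} * w(x). -/
/-!
Both divisibility hypotheses pass to the scalar `l W r`: grouping it as `(l W) r` shows that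
`(x - x_a)^{κ_i}` divides it, grouping it as `l (W r)` that `(x - x_a)^{κ_j}` does, so the larger
power divides it. The degree bound on the quotient `w` then comes from
`deg (l W r) ≤ (κ_i - 1) + N + (κ_j - 1) = max(κ_i, κ_j) + min(κ_i, κ_j) + N - 2`.
-/

open Polynomial Matrix

section Divisibility

variable {m n R : Type*} [Fintype m] [Fintype n] [CommSemiring R]

theorem dvd_dotProduct_mulVec_of_dvd_vecMul {a : R} {l : m → R} {W : Matrix m n R} (r : n → R)
    (hlW : ∀ k, a ∣ (l ᵥ* W) k) : a ∣ l ⬝ᵥ (W *ᵥ r) := by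
  rw [dotProduct_mulVec]
  exact Finset.dvd_sum fun k _ => (hlW k).mul_right _

theorem dvd_dotProduct_mulVec_of_dvd_mulVec {a : R} (l : m → R) {W : Matrix m n R} {r : n → R}
    (hWr : ∀ i, a ∣ (W *ᵥ r) i) : a ∣ l ⬝ᵥ (W *ᵥ r) :=
  Finset.dvd_sum fun i _ => (hWr i).mul_left _

theorem pow_max_dvd_dotProduct_mulVec {a : R} {κ κ' : ℕ} {l : m → R} {W : Matrix m n R}
    {r : n → R} (hlW : ∀ k, a ^ κ ∣ (l ᵥ* W) k) (hWr : ∀ i, a ^ κ' ∣ (W *ᵥ r) i) :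
    a ^ max κ κ' ∣ l ⬝ᵥ (W *ᵥ r) := by
  rcases le_total κ κ' with h | h
  · rw [max_eq_right h]
    exact dvd_dotProduct_mulVec_of_dvd_mulVec l hWr
  · rw [max_eq_left h]
    exact dvd_dotProduct_mulVec_of_dvd_vecMul r hlW

end Divisibility

section Degree

variable {m n R : Type*} [Fintype m] [Fintype n] [Semiring R]

theorem Polynomial.natDegree_dotProduct_le {v w : m → R[X]} {a b : ℕ}
    (hv : ∀ i, (v i).natDegree ≤ a) (hw : ∀ i, (w i).natDegree ≤ b) :
    (v ⬝ᵥ w).natDegree ≤ a + b :=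
  natDegree_sum_le_of_forall_le _ _ fun i _ =>
    natDegree_mul_le.trans (add_le_add (hv i) (hw i))

theorem Polynomial.natDegree_dotProduct_mulVec_le {l : m → R[X]} {W : Matrix m n R[X]}
    {r : n → R[X]} {a N b : ℕ} (hl : ∀ i, (l i).natDegree ≤ a)
    (hW : ∀ i k, (W i k).natDegree ≤ N) (hr : ∀ k, (r k).natDegree ≤ b) :
    (l ⬝ᵥ (W *ᵥ r)).natDegree ≤ a + N + b := by
  rw [add_assoc]
  exact natDegree_dotProduct_le hl fun i => natDegree_dotProduct_le (hW i) hr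

end Degree

theorem Polynomial.natDegree_le_of_natDegree_mul_le {R : Type*} [Semiring R] [NoZeroDivisors R]
    {f w : R[X]} {d : ℕ} (hf : f ≠ 0) (h : (f * w).natDegree ≤ f.natDegree + d) :
    w.natDegree ≤ d := by
  rcases eq_or_ne w 0 with rfl | hw
  · simp
  · rw [natDegree_mul hf hw] at h
    omega

/-- If `(x-x_a)^{κ_i}` divides the covector polynomial `l(x) W(x)` (with `deg l ≤ κ_i - 1`)
and `(x-x_a)^{κ_j}` divides the vector polynomial `W(x) r(x)` (with `deg r ≤ κ_j - 1`),
where `W` is a matrix polynomial of degree (at most) `N`, then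
`l(x) W(x) r(x) = (x-x_a)^{max(κ_i,κ_j)} w(x)` for a scalar polynomial `w` of degree at most
`min(κ_i,κ_j) + N - 2`. -/
theorem stmt_6 (p N κi κj : ℕ) (hκi : 1 ≤ κi) (hκj : 1 ≤ κj)
    (W : Matrix (Fin p) (Fin p) (Polynomial ℂ))
    (hW : ∀ i k, (W i k).degree ≤ (N : WithBot ℕ)) (xa : ℂ)
    (l r : Fin p → Polynomial ℂ)
    (hl : ∀ i, (l i).degree ≤ ((κi - 1 : ℕ) : WithBot ℕ))
    (hr : ∀ k, (r k).degree ≤ ((κj - 1 : ℕ) : WithBot ℕ))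
    (hlW : ∀ k, (Polynomial.X - Polynomial.C xa) ^ κi ∣ ∑ i, l i * W i k)
    (hWr : ∀ i, (Polynomial.X - Polynomial.C xa) ^ κj ∣ ∑ k, W i k * r k) :
    ∃ w : Polynomial ℂ, w.degree ≤ ((min κi κj + N - 2 : ℕ) : WithBot ℕ) ∧
      ∑ i, ∑ k, l i * W i k * r k =
        (Polynomial.X - Polynomial.C xa) ^ max κi κj * w := by
  have hS : ∑ i, ∑ k, l i * W i k * r k = l ⬝ᵥ (W *ᵥ r) := by
    simp only [dotProduct, mulVec, Finset.mul_sum, mul_assoc]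
  obtain ⟨w, hw⟩ := pow_max_dvd_dotProduct_mulVec (l := l) (W := W) (r := r) hlW hWr
  have hdeg := natDegree_dotProduct_mulVec_le
    (fun i => natDegree_le_iff_degree_le.mpr (hl i))
    (fun i k => natDegree_le_iff_degree_le.mpr (hW i k))
    (fun k => natDegree_le_iff_degree_le.mpr (hr k))
  refine ⟨w, natDegree_le_iff_degree_le.mp ?_, hS.trans hw⟩
  refine natDegree_le_of_natDegree_mul_le (pow_ne_zero (max κi κj) (X_sub_C_ne_zero xa)) ?_
  rw [← hw, natDegree_pow, natDegree_X_sub_C, mul_one]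
  omega
end

section
/- Let G be an n-by-n block matrix with blocks G_{k,l} \in Matrix (Fin p) (Fin p) ℂ for 0 \le k, l < n, and suppose that for every m with 1 \le m \le n the leading principal block truncation G_{[m]} = (G_{k,l})_{0 \le k,l < m} is invertible (as an mp-by-mp matrix). Then there exist unique block lower unitriangular matrices S_1, S_2 (i.e., block lower triangular with identity diagonal blocks) and a unique block diagonal matrix H = diag(H_0, ..., H_{n-1}) with each H_k invertible such that G = S_1^{-1} * H * (S_2^{-1})^{⊤_b}, where ⊤_b denotes blockwise transpose (transposing the block pattern and each block). -/
/-!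
Let `b i` be the block of the index `i` and `G_{<a}` the truncation of `G` to the blocks before
block `a`. Subtracting from each row `i` the combination `G_{i,<} G_{<b i}⁻¹` of the rows of
earlier blocks clears `G` below its diagonal blocks; this is left multiplication by a block lower
unitriangular `S₁`, so `S₁ G` is block upper triangular. Doing the same for `Gᵀ` gives `S₂` with
`G S₂ᵀ` block lower triangular, hence `H = S₁ G S₂ᵀ` is block diagonal, and invertible because
`det S₁ = det S₂ = 1`.

For uniqueness, two factorizations `S₁⁻¹ H S₂⁻ᵀ = T₁⁻¹ K T₂⁻ᵀ` give `A H = K Bᵀ`, where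
`A = T₁ S₁⁻¹` is block lower and `Bᵀ = (S₂ T₂⁻¹)ᵀ` block upper unitriangular. Both sides are
then block diagonal, with the diagonal blocks of `H` and of `K` respectively, so `H = K`, and
cancelling the invertible `H` gives `A = Bᵀ = 1`.
-/

open Matrix OrderDual

namespace Matrix

variable {m α R : Type*}

-- Block *upper* unitriangular, as Mathlib's `BlockTriangular`; block lower is `toDual ∘ b`.
def BlockUnitriangular [DecidableEq m] [LT α] [Zero R] [One R] (M : Matrix m m R) (b : m → α) :
    Prop :=
  M.BlockTriangular b ∧ ∀ ⦃i j⦄, b i = b j → M i j = (1 : Matrix m m R) i j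

def IsBlockDiagonal [Zero R] (M : Matrix m m R) (b : m → α) : Prop :=
  ∀ ⦃i j⦄, b i ≠ b j → M i j = 0

theorem IsBlockDiagonal.toDual_comp [Zero R] {b : m → α} {M : Matrix m m R}
    (hM : M.IsBlockDiagonal b) : M.IsBlockDiagonal (toDual ∘ b) :=
  fun _ _ h => hM h

section Order

variable [LinearOrder α] [Zero R] {b : m → α} {M : Matrix m m R}

theorem IsBlockDiagonal.blockTriangular (hM : M.IsBlockDiagonal b) : M.BlockTriangular b :=
  fun _ _ h => hM h.ne'

theorem BlockTriangular.isBlockDiagonal (hM : M.BlockTriangular b)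
    (hM' : M.BlockTriangular (toDual ∘ b)) : M.IsBlockDiagonal b :=
  fun _ _ h => h.lt_or_gt.elim (fun h => hM' h) (fun h => hM h)

end Order

section Semiring

variable [DecidableEq m] [LinearOrder α] [Semiring R] {b : m → α} {M N : Matrix m m R}

theorem BlockUnitriangular.toSquareBlock_eq_one (hM : M.BlockUnitriangular b) (a : α) :
    M.toSquareBlock b a = 1 := by
  rw [toSquareBlock_def, ← submatrix_one_embedding (Function.Embedding.subtype _)]
  ext i j
  exact hM.2 (i.2.trans j.2.symm)

theorem BlockUnitriangular.transpose (hM : M.BlockUnitriangular (toDual ∘ b)) :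
    Mᵀ.BlockUnitriangular b :=
  ⟨fun _ _ h => hM.1 h, fun i j h => by
    rw [transpose_apply, hM.2 (congrArg toDual h.symm), ← transpose_apply (1 : Matrix m m R),
      transpose_one]⟩

variable [Fintype m]

theorem BlockUnitriangular.mul_apply_of_eq (hM : M.BlockUnitriangular b)
    (hN : N.BlockTriangular b) {i j : m} (hij : b i = b j) : (M * N) i j = N i j := by
  rw [mul_apply, Finset.sum_eq_single i (fun k _ hki => ?_) (by simp), hM.2 rfl, one_apply_eq,
    one_mul]
  rcases lt_trichotomy (b k) (b i) with h | h | h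
  · rw [hM.1 h, zero_mul]
  · rw [hM.2 h.symm, one_apply_ne hki.symm, zero_mul]
  · rw [hN (hij ▸ h), mul_zero]

theorem BlockUnitriangular.mul_apply_of_eq' (hM : M.BlockUnitriangular b)
    (hN : N.BlockTriangular b) {i j : m} (hij : b i = b j) : (N * M) i j = N i j := by
  rw [mul_apply, Finset.sum_eq_single j (fun k _ hkj => ?_) (by simp), hM.2 rfl, one_apply_eq,
    mul_one]
  rcases lt_trichotomy (b k) (b j) with h | h | h
  · rw [hN (hij ▸ h), zero_mul]
  · rw [hM.2 h, one_apply_ne hkj, mul_zero]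
  · rw [hM.1 h, mul_zero]

theorem BlockUnitriangular.mul (hM : M.BlockUnitriangular b) (hN : N.BlockUnitriangular b) :
    (M * N).BlockUnitriangular b :=
  ⟨hM.1.mul hN.1, fun _ _ h => (hM.mul_apply_of_eq hN.1 h).trans (hN.2 h)⟩

theorem BlockUnitriangular.mul_eq_self_of_isBlockDiagonal (hM : M.BlockUnitriangular b)
    (hN : N.IsBlockDiagonal b) (hMN : (M * N).IsBlockDiagonal b) : M * N = N := by
  ext i j
  by_cases h : b i = b j
  · exact hM.mul_apply_of_eq hN.blockTriangular h
  · rw [hMN h, hN h]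

theorem BlockUnitriangular.mul_eq_self_of_isBlockDiagonal' (hM : M.BlockUnitriangular b)
    (hN : N.IsBlockDiagonal b) (hNM : (N * M).IsBlockDiagonal b) : N * M = N := by
  ext i j
  by_cases h : b i = b j
  · exact hM.mul_apply_of_eq' hN.blockTriangular h
  · rw [hNM h, hN h]

end Semiring

section CommRing

variable [Fintype m] [DecidableEq m] [LinearOrder α] [CommRing R] {b : m → α} {M : Matrix m m R}

theorem BlockUnitriangular.det_eq_one (hM : M.BlockUnitriangular b) : M.det = 1 := by
  simp [hM.1.det, hM.toSquareBlock_eq_one]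

theorem BlockUnitriangular.isUnit_det (hM : M.BlockUnitriangular b) : IsUnit M.det := by
  rw [hM.det_eq_one]
  exact isUnit_one

theorem BlockUnitriangular.inv (hM : M.BlockUnitriangular b) : M⁻¹.BlockUnitriangular b := by
  have := M.invertibleOfIsUnitDet hM.isUnit_det
  have hinv : M⁻¹.BlockTriangular b := blockTriangular_inv_of_blockTriangular hM.1
  refine ⟨hinv, fun i j hij => ?_⟩
  rw [← hM.mul_apply_of_eq hinv hij, mul_inv_of_invertible]

theorem BlockUnitriangular.isUnit (hM : M.BlockUnitriangular b) : IsUnit M :=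
  (isUnit_iff_isUnit_det M).mpr hM.isUnit_det

noncomputable def gaussBorelCoeff (b : m → α) (G : Matrix m m R) : Matrix m m R :=
  of fun i j =>
    if h : b j < b i then
      ((fun k : {k // b k < b i} => G i k) ᵥ* (G.toBlock (b · < b i) (b · < b i))⁻¹) ⟨j, h⟩
    else 0

theorem gaussBorelCoeff_apply_of_not_lt (G : Matrix m m R) {i j : m} (h : ¬b j < b i) :
    gaussBorelCoeff b G i j = 0 :=
  dif_neg h

theorem gaussBorelCoeff_mul_apply {G : Matrix m m R} {i j : m}
    (hG : IsUnit (G.toBlock (b · < b i) (b · < b i))) (hji : b j < b i) :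
    (gaussBorelCoeff b G * G) i j = G i j := by
  set A := G.toBlock (b · < b i) (b · < b i)
  set v : {k // b k < b i} → R := fun k => G i k
  have hA : IsUnit A.det := (isUnit_iff_isUnit_det A).mp hG
  calc (gaussBorelCoeff b G * G) i j
      = ∑ k : {k // b k < b i}, (v ᵥ* A⁻¹) k * A k ⟨j, hji⟩ := by
        have hzero : ∑ k : {k // ¬b k < b i}, gaussBorelCoeff b G i k * G k j = 0 :=
          Finset.sum_eq_zero fun k _ => by rw [gaussBorelCoeff_apply_of_not_lt G k.2, zero_mul]
        rw [mul_apply, ← Fintype.sum_subtype_add_sum_subtype (b · < b i), hzero, add_zero]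
        exact Finset.sum_congr rfl fun k _ => congrArg (· * G k j) (dif_pos k.2)
    _ = (v ᵥ* (A⁻¹ * A)) ⟨j, hji⟩ := by rw [← vecMul_vecMul]; rfl
    _ = G i j := by rw [nonsing_inv_mul A hA, vecMul_one]

noncomputable def gaussBorelLower (b : m → α) (G : Matrix m m R) : Matrix m m R :=
  1 - gaussBorelCoeff b G

theorem blockUnitriangular_gaussBorelLower (G : Matrix m m R) :
    (gaussBorelLower b G).BlockUnitriangular (toDual ∘ b) := by
  refine ⟨blockTriangular_one.sub fun i j h => gaussBorelCoeff_apply_of_not_lt G h.not_gt,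
    fun i j h => ?_⟩
  rw [gaussBorelLower, sub_apply,
    gaussBorelCoeff_apply_of_not_lt G (toDual_inj.mp h).not_gt, sub_zero]

theorem blockTriangular_gaussBorelLower_mul {G : Matrix m m R}
    (hG : ∀ a, IsUnit (G.toBlock (b · < a) (b · < a))) :
    (gaussBorelLower b G * G).BlockTriangular b := fun i _ hji => by
  rw [gaussBorelLower, sub_mul, one_mul, sub_apply, gaussBorelCoeff_mul_apply (hG (b i)) hji,
    sub_self]

theorem exists_gaussBorel {G : Matrix m m R} (hG : IsUnit G)
    (hlead : ∀ a, IsUnit (G.toBlock (b · < a) (b · < a))) :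
    ∃ S₁ S₂ H : Matrix m m R, S₁.BlockUnitriangular (toDual ∘ b) ∧
      S₂.BlockUnitriangular (toDual ∘ b) ∧ H.IsBlockDiagonal b ∧ IsUnit H ∧
      G = S₁⁻¹ * H * S₂⁻¹ᵀ := by
  have hlead' : ∀ a, IsUnit (Gᵀ.toBlock (b · < a) (b · < a)) :=
    fun a => (isUnit_transpose _).mpr (hlead a)
  set S₁ := gaussBorelLower b G
  set S₂ := gaussBorelLower b Gᵀ
  have hS₁ : S₁.BlockUnitriangular (toDual ∘ b) := blockUnitriangular_gaussBorelLower G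
  have hS₂ : S₂.BlockUnitriangular (toDual ∘ b) := blockUnitriangular_gaussBorelLower Gᵀ
  have hupper : (S₁ * G * S₂ᵀ).BlockTriangular b :=
    (blockTriangular_gaussBorelLower_mul hlead).mul hS₂.transpose.1
  have hlower : (S₁ * G * S₂ᵀ).BlockTriangular (toDual ∘ b) := by
    rw [Matrix.mul_assoc, ← transpose_transpose G, ← transpose_mul]
    exact hS₁.1.mul (blockTriangular_gaussBorelLower_mul hlead').transpose
  refine ⟨S₁, S₂, S₁ * G * S₂ᵀ, hS₁, hS₂, hupper.isBlockDiagonal hlower,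
    (hS₁.isUnit.mul hG).mul ((isUnit_transpose _).mpr hS₂.isUnit), ?_⟩
  rw [transpose_nonsing_inv, Matrix.mul_assoc S₁, nonsing_inv_mul_cancel_left _ _ hS₁.isUnit_det,
    mul_nonsing_inv_cancel_right _ _ (det_transpose S₂ ▸ hS₂.isUnit_det)]

theorem gaussBorel_unique {S₁ S₂ H T₁ T₂ K : Matrix m m R}
    (hS₁ : S₁.BlockUnitriangular (toDual ∘ b)) (hS₂ : S₂.BlockUnitriangular (toDual ∘ b))
    (hH : H.IsBlockDiagonal b) (hHu : IsUnit H)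
    (hT₁ : T₁.BlockUnitriangular (toDual ∘ b)) (hT₂ : T₂.BlockUnitriangular (toDual ∘ b))
    (hK : K.IsBlockDiagonal b) (h : S₁⁻¹ * H * S₂⁻¹ᵀ = T₁⁻¹ * K * T₂⁻¹ᵀ) :
    S₁ = T₁ ∧ S₂ = T₂ ∧ H = K := by
  set A := T₁ * S₁⁻¹
  set B := S₂ * T₂⁻¹
  have hA : A.BlockUnitriangular (toDual ∘ b) := hT₁.mul hS₁.inv
  have hB : Bᵀ.BlockUnitriangular b := (hS₂.mul hT₂.inv).transpose
  have hAK : A * H = K * Bᵀ := by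
    calc A * H = T₁ * (S₁⁻¹ * H * S₂⁻¹ᵀ) * S₂ᵀ := by
          rw [transpose_nonsing_inv, ← Matrix.mul_assoc T₁,
            nonsing_inv_mul_cancel_right _ _ (det_transpose S₂ ▸ hS₂.isUnit_det), Matrix.mul_assoc]
      _ = T₁ * (T₁⁻¹ * K * T₂⁻¹ᵀ) * S₂ᵀ := by rw [h]
      _ = K * Bᵀ := by
          rw [Matrix.mul_assoc T₁⁻¹, ← Matrix.mul_assoc T₁, mul_nonsing_inv _ hT₁.isUnit_det,
            Matrix.one_mul, Matrix.mul_assoc, transpose_mul]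
  have hdiag : (A * H).IsBlockDiagonal b :=
    (hAK ▸ hK.blockTriangular.mul hB.1).isBlockDiagonal (hA.1.mul hH.toDual_comp.blockTriangular)
  have hAH : A * H = H := hA.mul_eq_self_of_isBlockDiagonal hH.toDual_comp hdiag.toDual_comp
  have hKB : K * Bᵀ = K := hB.mul_eq_self_of_isBlockDiagonal' hK (hAK ▸ hdiag)
  have hHK : H = K := hAH.symm.trans (hAK.trans hKB)
  have hA1 : A = 1 := hHu.mul_left_injective (hAH.trans (Matrix.one_mul H).symm)
  have hB1 : Bᵀ = 1 := (hHK ▸ hHu).mul_right_injective (hKB.trans (Matrix.mul_one K).symm)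
  refine ⟨?_, ?_, hHK⟩
  · calc S₁ = A * S₁ := by rw [hA1, Matrix.one_mul]
      _ = T₁ := nonsing_inv_mul_cancel_right S₁ T₁ hS₁.isUnit_det
  · calc S₂ = B * T₂ := (nonsing_inv_mul_cancel_right T₂ S₂ hT₂.isUnit_det).symm
      _ = T₂ := by rw [transpose_eq_one.mp hB1, Matrix.one_mul]

theorem existsUnique_gaussBorel {G : Matrix m m R} (hG : IsUnit G)
    (hlead : ∀ a, IsUnit (G.toBlock (b · < a) (b · < a))) :
    ∃! T : Matrix m m R × Matrix m m R × Matrix m m R,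
      T.1.BlockUnitriangular (toDual ∘ b) ∧ T.2.1.BlockUnitriangular (toDual ∘ b) ∧
      T.2.2.IsBlockDiagonal b ∧ IsUnit T.2.2 ∧ G = T.1⁻¹ * T.2.2 * T.2.1⁻¹ᵀ := by
  obtain ⟨S₁, S₂, H, hS₁, hS₂, hH, hHu, hG⟩ := exists_gaussBorel hG hlead
  refine ⟨(S₁, S₂, H), ⟨hS₁, hS₂, hH, hHu, hG⟩, ?_⟩
  rintro ⟨T₁, T₂, K⟩ ⟨hT₁, hT₂, hK, -, hGK⟩
  obtain ⟨rfl, rfl, rfl⟩ := gaussBorel_unique hS₁ hS₂ hH hHu hT₁ hT₂ hK (hG.symm.trans hGK)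
  rfl

end CommRing

theorem blockUnitriangular_toDual_fst_iff {ι κ R : Type*} [LinearOrder ι] [DecidableEq κ] [Zero R]
    [One R] {M : Matrix (ι × κ) (ι × κ) R} :
    M.BlockUnitriangular (toDual ∘ Prod.fst) ↔
      (∀ k l : ι, k < l → ∀ i j : κ, M (k, i) (l, j) = 0) ∧
      ∀ (k : ι) (i j : κ), M (k, i) (k, j) = if i = j then 1 else 0 := by
  refine ⟨fun h => ⟨fun k l hkl i j => h.1 hkl, fun k i j => ?_⟩, fun h => ⟨?_, ?_⟩⟩
  · rw [h.2 (i := (k, i)) (j := (k, j)) rfl, one_apply]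
    simp
  · rintro ⟨k, i⟩ ⟨l, j⟩ hkl
    exact h.1 k l hkl i j
  · rintro ⟨k, i⟩ ⟨l, j⟩ (rfl : k = l)
    simp [h.2, one_apply]

theorem isBlockDiagonal_fst_iff {ι κ R : Type*} [Zero R] {M : Matrix (ι × κ) (ι × κ) R} :
    M.IsBlockDiagonal Prod.fst ↔ ∀ k l : ι, k ≠ l → ∀ i j : κ, M (k, i) (l, j) = 0 :=
  ⟨fun h _ _ hkl _ _ => h hkl, fun h ⟨k, i⟩ ⟨l, j⟩ hkl => h k l hkl i j⟩

theorem IsBlockDiagonal.isUnit_iff_fst {ι κ R : Type*} [Fintype ι] [DecidableEq ι] [Fintype κ]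
    [DecidableEq κ] [CommRing R] {M : Matrix (ι × κ) (ι × κ) R} (hM : M.IsBlockDiagonal Prod.fst) :
    IsUnit M ↔ ∀ k, IsUnit (of fun i j : κ => M (k, i) (k, j)) := by
  have hM' : M = (blockDiagonal fun k => of fun i j : κ => M (k, i) (k, j)).submatrix
      (Equiv.prodComm ι κ) (Equiv.prodComm ι κ) := by
    ext ⟨k, i⟩ ⟨l, j⟩
    rw [submatrix_apply, Equiv.prodComm_apply, Equiv.prodComm_apply, Prod.swap_prod_mk,
      Prod.swap_prod_mk, blockDiagonal_apply]
    split_ifs with hkl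
    · subst hkl; rfl
    · exact hM hkl
  nth_rewrite 1 [hM']
  rw [isUnit_submatrix_equiv, isUnit_iff_isUnit_det, det_blockDiagonal,
    IsUnit.prod_univ_iff]
  simp only [isUnit_iff_isUnit_det]

theorem isUnit_toBlock_fst_lt {n p : ℕ} {R : Type*} [CommRing R]
    {G : Matrix (Fin n × Fin p) (Fin n × Fin p) R}
    (hG : ∀ (m : ℕ) (hm : m ≤ n), 0 < m →
      IsUnit (of fun a b : Fin m × Fin p => G (Fin.castLE hm a.1, a.2) (Fin.castLE hm b.1, b.2)))
    (a : Fin n) : IsUnit (G.toBlock (fun x => x.1 < a) (fun x => x.1 < a)) := by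
  rcases Nat.eq_zero_or_pos a with ha | ha
  · have : IsEmpty {x : Fin n × Fin p // x.1 < a} := ⟨fun x => by have := Fin.lt_def.mp x.2; omega⟩
    exact isUnit_of_subsingleton _
  · let e : Fin a × Fin p ≃ {x : Fin n × Fin p // x.1 < a} :=
      { toFun c := ⟨(Fin.castLE a.is_le' c.1, c.2), c.1.2⟩
        invFun x := (⟨x.1.1, x.2⟩, x.1.2)
        left_inv _ := rfl
        right_inv _ := rfl }
    exact (isUnit_submatrix_equiv e e).mp (hG a a.is_le' ha)

end Matrix

/-- Block Gauss–Borel (LU) factorization: if every leading principal block truncation of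
the `n`-block matrix `G` (blocks of size `p×p` over `ℂ`) is invertible, then there are
unique block lower unitriangular `S₁, S₂` and a unique block diagonal `H` with invertible
diagonal blocks such that `G = S₁⁻¹ H (S₂⁻¹)ᵀ`. -/
theorem stmt_12 (n p : ℕ) (G : Matrix (Fin n × Fin p) (Fin n × Fin p) ℂ)
    (hG : ∀ (m : ℕ) (hm : m ≤ n), 0 < m →
      IsUnit (Matrix.of fun a b : Fin m × Fin p =>
        G (Fin.castLE hm a.1, a.2) (Fin.castLE hm b.1, b.2))) :
    ∃! T : Matrix (Fin n × Fin p) (Fin n × Fin p) ℂ ×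
        Matrix (Fin n × Fin p) (Fin n × Fin p) ℂ ×
        Matrix (Fin n × Fin p) (Fin n × Fin p) ℂ,
      (∀ k l : Fin n, (k : ℕ) < (l : ℕ) → ∀ i j : Fin p, T.1 (k, i) (l, j) = 0) ∧
      (∀ (k : Fin n) (i j : Fin p), T.1 (k, i) (k, j) = if i = j then 1 else 0) ∧
      (∀ k l : Fin n, (k : ℕ) < (l : ℕ) → ∀ i j : Fin p, T.2.1 (k, i) (l, j) = 0) ∧
      (∀ (k : Fin n) (i j : Fin p), T.2.1 (k, i) (k, j) = if i = j then 1 else 0) ∧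
      (∀ k l : Fin n, k ≠ l → ∀ i j : Fin p, T.2.2 (k, i) (l, j) = 0) ∧
      (∀ k : Fin n, IsUnit (Matrix.of fun i j : Fin p => T.2.2 (k, i) (k, j))) ∧
      G = T.1⁻¹ * T.2.2 * (T.2.1⁻¹)ᵀ := by
  have hGu : IsUnit G := by
    rcases Nat.eq_zero_or_pos n with rfl | hn
    · exact isUnit_of_subsingleton G
    · have h := hG n le_rfl hn
      simp only [Fin.castLE_rfl, id] at h
      exact h
  refine (existsUnique_congr fun T => ?_).mp
    (existsUnique_gaussBorel (b := Prod.fst) hGu (isUnit_toBlock_fst_lt hG))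
  rw [blockUnitriangular_toDual_fst_iff, blockUnitriangular_toDual_fst_iff, isBlockDiagonal_fst_iff,
    and_assoc, and_assoc]
  refine and_congr_right' <| and_congr_right' <| and_congr_right' <| and_congr_right' <|
    and_congr_right fun hT => and_congr_left' ?_
  exact (isBlockDiagonal_fst_iff.mpr hT).isUnit_iff_fst
end

section
/- Let B be a sesquilinear form on p-by-p matrix polynomials satisfying B(A*P, Q) = A*B(P,Q) and B(P, A*Q) = B(P,Q)*A^⊤ for all matrices A, additivity in each argument, and let {P_n}, {Q_n} be families of matrix polynomials with B(P_n, Q_m) = δ_{n,m} H_n where each H_n is invertible. Define the Christoffel–Darboux kernel K_n(x,z) := \sum_{k=0}^{n} Q_k(z)^⊤ * H_k^{-1} * P_k(x), regarded as a matrix polynomial in x with coefficients depending on z. Then for every m \le n and all matrices C_0, ..., C_m, one has B(K_n(·,z), \sum_{j=0}^{m} C_j Q_j(·)) = (\sum_{j=0}^{m} C_j Q_j(z))^⊤. -/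
/-!
Expanding both arguments by biadditivity and matrix-linearity reduces the pairing to the
pairings `B(P_k, Q_j) = δ_{kj} H_k`, so the factor `H_k⁻¹` built into the kernel cancels
`H_k` and only the diagonal terms `Q_j(z)ᵀ C_jᵀ = (C_j Q_j(z))ᵀ` survive; `m ≤ n` ensures every
`Q_j` of the right-hand side meets its partner `P_j` in the kernel.
-/

open Matrix Polynomial

section Biadditive

variable {M N R : Type*} [AddCommGroup R]

theorem map_sum_left_of_map_add_left [AddCommMonoid M] (B : M → N → R)
    (hB_add : ∀ P P' Q, B (P + P') Q = B P Q + B P' Q) {ι : Type*} (s : Finset ι)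
    (f : ι → M) (Q : N) : B (∑ i ∈ s, f i) Q = ∑ i ∈ s, B (f i) Q :=
  map_sum (AddMonoidHom.mk' (B · Q) (hB_add · · Q)) f s

theorem map_sum_right_of_map_add_right [AddCommMonoid N] (B : M → N → R)
    (hB_add : ∀ P Q Q', B P (Q + Q') = B P Q + B P Q') {ι : Type*} (s : Finset ι)
    (P : M) (f : ι → N) : B P (∑ i ∈ s, f i) = ∑ i ∈ s, B P (f i) :=
  map_sum (AddMonoidHom.mk' (B P) (hB_add P)) f s

end Biadditive

section Biorthogonal

variable {K ι : Type*} [CommRing K] [Fintype ι] [DecidableEq ι]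

noncomputable def christoffelDarbouxKernel (Pn Qn : ℕ → (Matrix ι ι K)[X])
    (H : ℕ → Matrix ι ι K) (n : ℕ) (x : Matrix ι ι K) : (Matrix ι ι K)[X] :=
  ∑ k ∈ Finset.range (n + 1), C (((Qn k).eval x)ᵀ * (H k)⁻¹) * Pn k

theorem biorthogonal_sum_C_mul_inv_mul_left {B : (Matrix ι ι K)[X] → (Matrix ι ι K)[X] →
      Matrix ι ι K}
    (hB_addl : ∀ P P' Q, B (P + P') Q = B P Q + B P' Q)
    (hB_left : ∀ (A : Matrix ι ι K) (P Q), B (C A * P) Q = A * B P Q)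
    {Pn Qn : ℕ → (Matrix ι ι K)[X]} {H : ℕ → Matrix ι ι K} (hH : ∀ k, IsUnit (H k))
    (horth : ∀ k l, B (Pn k) (Qn l) = if k = l then H k else 0)
    (c : ℕ → Matrix ι ι K) {s : Finset ℕ} {j : ℕ} (hj : j ∈ s) :
    B (∑ k ∈ s, C (c k * (H k)⁻¹) * Pn k) (Qn j) = c j := by
  simp only [map_sum_left_of_map_add_left B hB_addl, hB_left, horth, mul_ite, mul_zero,
    Finset.sum_ite_eq', if_pos hj]
  rw [mul_assoc, nonsing_inv_mul _ ((isUnit_iff_isUnit_det _).mp (hH j)), mul_one]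

theorem christoffelDarbouxKernel_reproducing {B : (Matrix ι ι K)[X] → (Matrix ι ι K)[X] →
      Matrix ι ι K}
    (hB_addl : ∀ P P' Q, B (P + P') Q = B P Q + B P' Q)
    (hB_addr : ∀ P Q Q', B P (Q + Q') = B P Q + B P Q')
    (hB_left : ∀ (A : Matrix ι ι K) (P Q), B (C A * P) Q = A * B P Q)
    (hB_right : ∀ (A : Matrix ι ι K) (P Q), B P (C A * Q) = B P Q * Aᵀ)
    {Pn Qn : ℕ → (Matrix ι ι K)[X]} {H : ℕ → Matrix ι ι K} (hH : ∀ k, IsUnit (H k))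
    (horth : ∀ k l, B (Pn k) (Qn l) = if k = l then H k else 0)
    {n : ℕ} {t : Finset ℕ} (ht : t ⊆ Finset.range (n + 1)) (Cf : ℕ → Matrix ι ι K)
    (x : Matrix ι ι K) :
    B (christoffelDarbouxKernel Pn Qn H n x) (∑ j ∈ t, C (Cf j) * Qn j) =
      ((∑ j ∈ t, C (Cf j) * Qn j).eval x)ᵀ := by
  rw [map_sum_right_of_map_add_right _ hB_addr, eval_finsetSum, transpose_sum]
  refine Finset.sum_congr rfl fun j hj => ?_
  rw [hB_right, christoffelDarbouxKernel,
    biorthogonal_sum_C_mul_inv_mul_left hB_addl hB_left hH horth _ (ht hj), eval_C_mul,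
    transpose_mul]

end Biorthogonal

/-- Reproducing (projection) property of the Christoffel–Darboux kernel: for a sesquilinear
form `B` on matrix polynomials with biorthogonal families `{P_n}, {Q_n}` and invertible
matrix norms `H_n`, the kernel `K_n(x,z) = ∑_{k≤n} Q_k(z)ᵀ H_k⁻¹ P_k(x)` satisfies
`B(K_n(·,z), ∑_{j≤m} C_j Q_j) = (∑_{j≤m} C_j Q_j(z))ᵀ` for all `m ≤ n`. -/
theorem stmt_15 (p : ℕ)
    (B : Polynomial (Matrix (Fin p) (Fin p) ℂ) → Polynomial (Matrix (Fin p) (Fin p) ℂ) →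
      Matrix (Fin p) (Fin p) ℂ)
    (hB_addl : ∀ P P' Q, B (P + P') Q = B P Q + B P' Q)
    (hB_addr : ∀ P Q Q', B P (Q + Q') = B P Q + B P Q')
    (hB_left : ∀ (A : Matrix (Fin p) (Fin p) ℂ) (P Q),
      B (Polynomial.C A * P) Q = A * B P Q)
    (hB_right : ∀ (A : Matrix (Fin p) (Fin p) ℂ) (P Q),
      B P (Polynomial.C A * Q) = B P Q * Aᵀ)
    (Pn Qn : ℕ → Polynomial (Matrix (Fin p) (Fin p) ℂ))
    (H : ℕ → Matrix (Fin p) (Fin p) ℂ) (hH : ∀ k, IsUnit (H k))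
    (horth : ∀ k l, B (Pn k) (Qn l) = if k = l then H k else 0)
    (n m : ℕ) (hmn : m ≤ n) (Cf : ℕ → Matrix (Fin p) (Fin p) ℂ) (z : ℂ) :
    B (∑ k ∈ Finset.range (n + 1),
          Polynomial.C (((Qn k).eval (z • (1 : Matrix (Fin p) (Fin p) ℂ)))ᵀ * (H k)⁻¹) *
            Pn k)
        (∑ j ∈ Finset.range (m + 1), Polynomial.C (Cf j) * Qn j) =
      ((∑ j ∈ Finset.range (m + 1), Polynomial.C (Cf j) * Qn j).eval
          (z • (1 : Matrix (Fin p) (Fin p) ℂ)))ᵀ :=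
  christoffelDarbouxKernel_reproducing hB_addl hB_addr hB_left hB_right hH horth
    (Finset.range_subset_range.mpr (by omega)) Cf _
end

section
/- Let B_u and B_v be sesquilinear forms on p-by-p matrix polynomials (biadditive, B(AP,Q) = A B(P,Q), B(P,AQ) = B(P,Q) A^⊤) and set B := B_u + B_v. Suppose {P_n, Q_n, H_n} is a biorthogonal system for B_u (deg P_n = deg Q_n = n, both monic, B_u(P_n, Q_m) = δ_{n,m} H_n with H_n invertible) and {\hat P_n, \hat Q_n, \hat H_n} is a biorthogonal system for B (both monic of degree n, B(\hat P_n, \hat Q_m) = δ_{n,m} \hat H_n with \hat H_n invertible). Let K_{n-1}(z,y) := \sum_{k=0}^{n-1} Q_k(y)^⊤ H_k^{-1} P_k(z). Then for every n \ge 1: (i) \hat P_n(z) = P_n(z) - B_v(\hat P_n(·), (K_{n-1}(z,·))^⊤), where the second argument is the transpose of K_{n-1}(z,y) viewed as a matrix polynomial in y with parameter z; and (ii) \hat H_n = H_n + B_v(\hat P_n, Q_n). -/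
open Matrix


section Aux

variable {p : ℕ}

private lemma bsum_right {ι : Type} (B : Polynomial (Matrix (Fin p) (Fin p) ℂ) →
      Polynomial (Matrix (Fin p) (Fin p) ℂ) → Matrix (Fin p) (Fin p) ℂ)
    (haddr : ∀ P Q Q', B P (Q + Q') = B P Q + B P Q')
    (P : Polynomial (Matrix (Fin p) (Fin p) ℂ)) (s : Finset ι)
    (f : ι → Polynomial (Matrix (Fin p) (Fin p) ℂ)) :
    B P (∑ k ∈ s, f k) = ∑ k ∈ s, B P (f k) := by
  classical
  induction s using Finset.cons_induction with
  | empty =>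
    have h := haddr P 0 0
    rw [add_zero] at h
    simpa using (left_eq_add.mp h)
  | cons a s ha ih =>
    rw [Finset.sum_cons, Finset.sum_cons, haddr, ih]

private lemma bsum_left {ι : Type} (B : Polynomial (Matrix (Fin p) (Fin p) ℂ) →
      Polynomial (Matrix (Fin p) (Fin p) ℂ) → Matrix (Fin p) (Fin p) ℂ)
    (haddl : ∀ P P' Q, B (P + P') Q = B P Q + B P' Q)
    (Q : Polynomial (Matrix (Fin p) (Fin p) ℂ)) (s : Finset ι)
    (f : ι → Polynomial (Matrix (Fin p) (Fin p) ℂ)) :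
    B (∑ k ∈ s, f k) Q = ∑ k ∈ s, B (f k) Q := by
  classical
  induction s using Finset.cons_induction with
  | empty =>
    have h := haddl 0 0 Q
    rw [add_zero] at h
    simpa using (left_eq_add.mp h)
  | cons a s ha ih =>
    rw [Finset.sum_cons, Finset.sum_cons, haddl, ih]

private lemma expand_basis (R : ℕ → Polynomial (Matrix (Fin p) (Fin p) ℂ))
    (hR : ∀ k, (R k).Monic ∧ (R k).natDegree = k) :
    ∀ (n : ℕ) (S : Polynomial (Matrix (Fin p) (Fin p) ℂ)), S.degree < (n : ℕ) →
      ∃ A : ℕ → Matrix (Fin p) (Fin p) ℂ,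
        S = ∑ k ∈ Finset.range n, Polynomial.C (A k) * R k := by
  intro n
  induction n with
  | zero =>
    intro S hS
    refine ⟨0, ?_⟩
    have : S = 0 := by
      rw [← Polynomial.degree_eq_bot]
      exact Nat.WithBot.lt_zero_iff.mp (by simpa using hS)
    simp [this]
  | succ n ih =>
    intro S hS
    set a := S.coeff n with ha
    have hRn : (R n).coeff n = 1 := by
      have := (hR n).1.coeff_natDegree
      rwa [(hR n).2] at this
    have hdeg : (S - Polynomial.C a * R n).degree < (n : ℕ) := by
      rw [Polynomial.degree_lt_iff_coeff_zero]
      intro m hm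
      rw [Polynomial.coeff_sub, Polynomial.coeff_C_mul]
      rcases eq_or_lt_of_le hm with hm | hm
      · rw [← hm, hRn, mul_one, ha, sub_self]
      · have h1 : S.coeff m = 0 := by
          refine (Polynomial.degree_lt_iff_coeff_zero S (n + 1)).mp hS m hm
        have h2 : (R n).coeff m = 0 :=
          Polynomial.coeff_eq_zero_of_natDegree_lt (by rw [(hR n).2]; exact hm)
        rw [h1, h2, mul_zero, sub_zero]
    obtain ⟨A, hA⟩ := ih _ hdeg
    refine ⟨Function.update A n a, ?_⟩
    rw [Finset.sum_range_succ, Function.update_self]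
    have : ∑ k ∈ Finset.range n, Polynomial.C (Function.update A n a k) * R k
        = ∑ k ∈ Finset.range n, Polynomial.C (A k) * R k := by
      refine Finset.sum_congr rfl fun k hk => ?_
      rw [Function.update_of_ne (Finset.mem_range.mp hk).ne]
    rw [this, ← hA, sub_add_cancel]

end Aux

/-- Additive (Uvarov-type) perturbation formula: if `{P_n, Q_n, H_n}` is a biorthogonal
system for `B_u` and `{P̂_n, Q̂_n, Ĥ_n}` is a biorthogonal system for `B = B_u + B_v`
(all polynomials monic of the indicated degree, all `H_n, Ĥ_n` invertible), then for `n ≥ 1`: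
`P̂_n(z) = P_n(z) - B_v(P̂_n, (K_{n-1}(z,·))ᵀ)` with
`(K_{n-1}(z,·))ᵀ = ∑_{k<n} C(P_k(z)ᵀ (H_k⁻¹)ᵀ) Q_k`, and `Ĥ_n = H_n + B_v(P̂_n, Q_n)`. -/

theorem stmt_17 (p : ℕ)
    (Bu Bv : Polynomial (Matrix (Fin p) (Fin p) ℂ) → Polynomial (Matrix (Fin p) (Fin p) ℂ) →
      Matrix (Fin p) (Fin p) ℂ)
    (hBu_addl : ∀ P P' Q, Bu (P + P') Q = Bu P Q + Bu P' Q)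
    (hBu_addr : ∀ P Q Q', Bu P (Q + Q') = Bu P Q + Bu P Q')
    (hBu_left : ∀ (A : Matrix (Fin p) (Fin p) ℂ) (P Q),
      Bu (Polynomial.C A * P) Q = A * Bu P Q)
    (hBu_right : ∀ (A : Matrix (Fin p) (Fin p) ℂ) (P Q),
      Bu P (Polynomial.C A * Q) = Bu P Q * Aᵀ)
    (hBv_addl : ∀ P P' Q, Bv (P + P') Q = Bv P Q + Bv P' Q)
    (hBv_addr : ∀ P Q Q', Bv P (Q + Q') = Bv P Q + Bv P Q')
    (hBv_left : ∀ (A : Matrix (Fin p) (Fin p) ℂ) (P Q),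
      Bv (Polynomial.C A * P) Q = A * Bv P Q)
    (hBv_right : ∀ (A : Matrix (Fin p) (Fin p) ℂ) (P Q),
      Bv P (Polynomial.C A * Q) = Bv P Q * Aᵀ)
    (Pn Qn hatP hatQ : ℕ → Polynomial (Matrix (Fin p) (Fin p) ℂ))
    (H hatH : ℕ → Matrix (Fin p) (Fin p) ℂ)
    (hPn : ∀ k, (Pn k).Monic ∧ (Pn k).natDegree = k)
    (hQn : ∀ k, (Qn k).Monic ∧ (Qn k).natDegree = k)
    (hhatP : ∀ k, (hatP k).Monic ∧ (hatP k).natDegree = k)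
    (hhatQ : ∀ k, (hatQ k).Monic ∧ (hatQ k).natDegree = k)
    (hH : ∀ k, IsUnit (H k)) (hhatH : ∀ k, IsUnit (hatH k))
    (horthU : ∀ k l, Bu (Pn k) (Qn l) = if k = l then H k else 0)
    (horthB : ∀ k l,
      Bu (hatP k) (hatQ l) + Bv (hatP k) (hatQ l) = if k = l then hatH k else 0)
    (n : ℕ) (hn : 1 ≤ n) :
    (∀ z : ℂ,
        (hatP n).eval (z • (1 : Matrix (Fin p) (Fin p) ℂ)) =
          (Pn n).eval (z • (1 : Matrix (Fin p) (Fin p) ℂ)) -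
            Bv (hatP n)
              (∑ k ∈ Finset.range n,
                Polynomial.C
                    (((Pn k).eval (z • (1 : Matrix (Fin p) (Fin p) ℂ)))ᵀ * ((H k)⁻¹)ᵀ) *
                  Qn k)) ∧
      hatH n = H n + Bv (hatP n) (Qn n) := by
  classical
  have hHd : ∀ k, IsUnit (H k).det := fun k => (Matrix.isUnit_iff_isUnit_det _).mp (hH k)
  -- degree bound for difference of two monic polynomials of the same natDegree
  have hsub : ∀ (P Q : Polynomial (Matrix (Fin p) (Fin p) ℂ)) (m : ℕ),
      P.Monic → P.natDegree = m → Q.Monic → Q.natDegree = m → (P - Q).degree < (m : ℕ) := by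
    intro P Q m hPm hPd hQm hQd
    rw [Polynomial.degree_lt_iff_coeff_zero]
    intro j hj
    rw [Polynomial.coeff_sub]
    rcases eq_or_lt_of_le hj with hj | hj
    · have h1 := hPm.coeff_natDegree; rw [hPd] at h1
      have h2 := hQm.coeff_natDegree; rw [hQd] at h2
      rw [← hj, h1, h2, sub_self]
    · rw [Polynomial.coeff_eq_zero_of_natDegree_lt (by rw [hPd]; exact hj),
        Polynomial.coeff_eq_zero_of_natDegree_lt (by rw [hQd]; exact hj), sub_self]
  -- expansion of hatP n in the basis (Pn k)
  obtain ⟨A, hA⟩ := expand_basis Pn hPn n _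
    (hsub (hatP n) (Pn n) n (hhatP n).1 (hhatP n).2 (hPn n).1 (hPn n).2)
  have hhatPn : hatP n = Pn n + ∑ k ∈ Finset.range n, Polynomial.C (A k) * Pn k := by
    rw [← hA]; abel
  -- B(hatP n, Qn k) for k ≤ n
  have hBQ : ∀ k, k ≤ n →
      Bu (hatP n) (Qn k) + Bv (hatP n) (Qn k) = if n = k then hatH n else 0 := by
    intro k hk
    obtain ⟨D, hD⟩ := expand_basis hatQ hhatQ k _
      (hsub (Qn k) (hatQ k) k (hQn k).1 (hQn k).2 (hhatQ k).1 (hhatQ k).2)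
    have hQk : Qn k = hatQ k + ∑ j ∈ Finset.range k, Polynomial.C (D j) * hatQ j := by
      rw [← hD]; abel
    rw [hQk, hBu_addr, hBv_addr, bsum_right Bu hBu_addr, bsum_right Bv hBv_addr]
    have hterm : ∀ j ∈ Finset.range k,
        Bu (hatP n) (Polynomial.C (D j) * hatQ j) +
          Bv (hatP n) (Polynomial.C (D j) * hatQ j) = 0 := by
      intro j hj
      have hj' := Finset.mem_range.mp hj
      rw [hBu_right, hBv_right, ← add_mul, horthB, if_neg (by omega : n ≠ j), zero_mul]
    rw [add_add_add_comm, ← Finset.sum_add_distrib, Finset.sum_eq_zero hterm, add_zero,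
      horthB]
  -- identify the coefficients A k for k < n
  have hAk : ∀ k, k < n → A k = -(Bv (hatP n) (Qn k)) * (H k)⁻¹ := by
    intro k hk
    have h1 : Bu (hatP n) (Qn k) = A k * H k := by
      rw [hhatPn, hBu_addl, bsum_left Bu hBu_addl]
      have hterm : ∀ j ∈ Finset.range n,
          Bu (Polynomial.C (A j) * Pn j) (Qn k) = if j = k then A j * H j else 0 := by
        intro j hj
        rw [hBu_left, horthU, mul_ite, mul_zero]
      rw [Finset.sum_congr rfl hterm, Finset.sum_ite_eq' (Finset.range n) k
        (fun j => A j * H j), horthU, if_neg (by omega : n ≠ k),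
        if_pos (Finset.mem_range.mpr hk), zero_add]
    have h2 : Bu (hatP n) (Qn k) = -(Bv (hatP n) (Qn k)) := by
      have h := hBQ k hk.le
      rw [if_neg (by omega : n ≠ k)] at h
      exact eq_neg_of_add_eq_zero_left h
    calc A k = A k * (H k * (H k)⁻¹) := by rw [Matrix.mul_nonsing_inv _ (hHd k), mul_one]
      _ = (A k * H k) * (H k)⁻¹ := by rw [mul_assoc]
      _ = -(Bv (hatP n) (Qn k)) * (H k)⁻¹ := by rw [← h1, h2]
  -- the H-identity
  have hBuQn : Bu (hatP n) (Qn n) = H n := by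
    rw [hhatPn, hBu_addl, bsum_left Bu hBu_addl]
    have hz : ∀ j ∈ Finset.range n, Bu (Polynomial.C (A j) * Pn j) (Qn n) = 0 := by
      intro j hj
      have hj' := Finset.mem_range.mp hj
      rw [hBu_left, horthU, if_neg (by omega : j ≠ n), mul_zero]
    rw [Finset.sum_eq_zero hz, add_zero, horthU, if_pos rfl]
  have goal2 : hatH n = H n + Bv (hatP n) (Qn n) := by
    have h := hBQ n le_rfl
    rw [if_pos rfl, hBuQn] at h
    exact h.symm
  refine ⟨fun z => ?_, goal2⟩
  have hL : (hatP n).eval (z • (1 : Matrix (Fin p) (Fin p) ℂ)) =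
      (Pn n).eval (z • (1 : Matrix (Fin p) (Fin p) ℂ)) +
        ∑ k ∈ Finset.range n, A k * (Pn k).eval (z • (1 : Matrix (Fin p) (Fin p) ℂ)) := by
    rw [hhatPn, Polynomial.eval_add, Polynomial.eval_finset_sum]
    congr 1
    exact Finset.sum_congr rfl fun k _ => Polynomial.eval_C_mul
  have hR : Bv (hatP n)
        (∑ k ∈ Finset.range n,
          Polynomial.C
              (((Pn k).eval (z • (1 : Matrix (Fin p) (Fin p) ℂ)))ᵀ * ((H k)⁻¹)ᵀ) * Qn k) =
      ∑ k ∈ Finset.range n,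
        Bv (hatP n) (Qn k) *
          ((H k)⁻¹ * (Pn k).eval (z • (1 : Matrix (Fin p) (Fin p) ℂ))) := by
    rw [bsum_right Bv hBv_addr]
    refine Finset.sum_congr rfl fun k _ => ?_
    rw [hBv_right, Matrix.transpose_mul, Matrix.transpose_transpose,
      Matrix.transpose_transpose]
  rw [hL, hR, sub_eq_add_neg, ← Finset.sum_neg_distrib]
  congr 1
  refine Finset.sum_congr rfl fun k hk => ?_
  rw [hAk k (Finset.mem_range.mp hk), neg_mul, neg_mul, mul_assoc]
end
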